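/- Let q ≥ 3 be an integer and θ = 1 − 1/q. There exists δ_E ∈ ( (2q−3)/(q(q−1)), (3/4)·(q − 4/3)/(q−1) ) such that the Elias bound α_E(x) = 1 − H_q(θ(1 − √(1 − x/θ))) is convex on [0, δ_E] and concave on [δ_E, θ]; moreover α_E″(x) > 0 for x ∈ (0, δ_E) and α_E″(x) < 0 for x ∈ (δ_E, θ). -/

import Mathlib

/-!
Substitute `s = √(1 - x/θ)`, so that `x = θ(1 - s²)` and the argument of `H_q` is `θ(1 - s)`.
With `G(s) = logRatio q s = log ((1 + (q-1)s)/(1-s))` one has `H_q'(θ(1 - s)) = G(s) / log q`,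
hence `α_E'(x) = -G(s) / (2 s log q)` and `α_E''(x) = F(s) / (4 θ s³ log q)`, where
`F(s) = s G'(s) - G(s) = inflectionFn q s`. Now `F(0) = 0`, and `F'(s) = s G''(s)` has the sign
of `s - s₀` with `s₀ = (q-2)/(2(q-1))`, while `F(s₁) = t - 1/t - 2 log t > 0` at
`s₁ = (q-2)/(q-1)`, `t = q - 1`. So `F` changes sign exactly once on `(0, 1)`, at some
`s_c ∈ (s₀, s₁)`, and `δ_E = θ(1 - s_c²)`; the two bounds on `δ_E` are `θ(1 - s₁²)` and
`θ(1 - s₀²)`.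
-/

open Filter Real Set

/-- The q-ary entropy function. -/
noncomputable def qEntropy (q : ℕ) (x : ℝ) : ℝ :=
  x * Real.logb q (((q : ℝ) - 1) / x) + (1 - x) * Real.logb q (1 / (1 - x))

/-- The Elias bound `α_E` (with `θ = 1 - 1/q`). -/
noncomputable def alphaE (q : ℕ) (x : ℝ) : ℝ :=
  1 - qEntropy q ((1 - 1 / (q : ℝ)) * (1 - Real.sqrt (1 - x / (1 - 1 / (q : ℝ)))))

noncomputable def logRatio (r s : ℝ) : ℝ := log ((1 + (r - 1) * s) / (1 - s))

noncomputable def inflectionFn (r s : ℝ) : ℝ :=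
  r * s / ((1 - s) * (1 + (r - 1) * s)) - logRatio r s

section InflectionFn

variable {r s : ℝ}

lemma hasDerivAt_logRatio (hr : 1 ≤ r) (hs₀ : 0 ≤ s) (hs₁ : s < 1) :
    HasDerivAt (logRatio r) (r / ((1 - s) * (1 + (r - 1) * s))) s := by
  have h₁ : 0 < 1 - s := by linarith
  have h₂ : 0 < 1 + (r - 1) * s := by nlinarith
  have hquot := ((((hasDerivAt_id' s).const_mul (r - 1)).const_add 1).fun_div
    ((hasDerivAt_id' s).const_sub 1) h₁.ne').log (div_pos h₂ h₁).ne'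
  exact hquot.congr_deriv (by field_simp; ring)

lemma hasDerivAt_inflectionFn (hr : 1 ≤ r) (hs₀ : 0 ≤ s) (hs₁ : s < 1) :
    HasDerivAt (inflectionFn r)
      (r * s * (2 * (r - 1) * s - (r - 2)) / ((1 - s) * (1 + (r - 1) * s)) ^ 2) s := by
  have h₁ : 0 < 1 - s := by linarith
  have h₂ : 0 < 1 + (r - 1) * s := by nlinarith
  have hden := ((hasDerivAt_id' s).const_sub 1).fun_mul
    (((hasDerivAt_id' s).const_mul (r - 1)).const_add 1)
  exact ((((hasDerivAt_id' s).const_mul r).fun_div hden (by positivity)).sub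
    (hasDerivAt_logRatio hr hs₀ hs₁)).congr_deriv (by field_simp; ring)

lemma hasDerivAt_logRatio_div_self (hr : 1 ≤ r) (hs₀ : 0 < s) (hs₁ : s < 1) :
    HasDerivAt (fun s ↦ logRatio r s / s) (inflectionFn r s / s ^ 2) s :=
  ((hasDerivAt_logRatio hr hs₀.le hs₁).fun_div (hasDerivAt_id' s) hs₀.ne').congr_deriv
    (by rw [inflectionFn]; field_simp)

lemma continuousOn_inflectionFn (hr : 1 ≤ r) : ContinuousOn (inflectionFn r) (Ico 0 1) :=
  fun _ hs ↦ (hasDerivAt_inflectionFn hr hs.1 hs.2).continuousAt.continuousWithinAt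

lemma inflectionFn_zero : inflectionFn r 0 = 0 := by simp [inflectionFn, logRatio]

variable (hr : 2 < r)
include hr

lemma strictAntiOn_inflectionFn :
    StrictAntiOn (inflectionFn r) (Icc 0 ((r - 2) / (2 * (r - 1)))) := by
  have hs₀ : (r - 2) / (2 * (r - 1)) < 1 := by rw [div_lt_one (by linarith)]; linarith
  refine strictAntiOn_of_deriv_neg (convex_Icc _ _)
    ((continuousOn_inflectionFn (by linarith)).mono (Icc_subset_Ico_right hs₀)) ?_
  intro s hs
  rw [interior_Icc] at hs
  rw [(hasDerivAt_inflectionFn (by linarith) hs.1.le (hs.2.trans hs₀)).deriv]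
  have hlt : 2 * (r - 1) * s < r - 2 := by
    have := hs.2; rw [lt_div_iff₀ (by linarith)] at this; linarith
  have h₁ : 0 < 1 - s := by linarith [hs.2]
  have h₂ : 0 < 1 + (r - 1) * s := by nlinarith [hs.1]
  apply div_neg_of_neg_of_pos _ (by positivity)
  exact mul_neg_of_pos_of_neg (by nlinarith [hs.1]) (by linarith)

lemma strictMonoOn_inflectionFn :
    StrictMonoOn (inflectionFn r) (Ico ((r - 2) / (2 * (r - 1))) 1) := by
  have hs₀ : 0 ≤ (r - 2) / (2 * (r - 1)) := div_nonneg (by linarith) (by linarith)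
  refine strictMonoOn_of_deriv_pos (convex_Ico _ _)
    ((continuousOn_inflectionFn (by linarith)).mono (Ico_subset_Ico_left hs₀)) ?_
  intro s hs
  rw [interior_Ico] at hs
  have hs0 : 0 < s := hs₀.trans_lt hs.1
  rw [(hasDerivAt_inflectionFn (by linarith) hs0.le hs.2).deriv]
  have hgt : r - 2 < 2 * (r - 1) * s := by
    have := hs.1; rw [div_lt_iff₀ (by linarith)] at this; linarith
  have h₁ : 0 < 1 - s := by linarith [hs.2]
  have h₂ : 0 < 1 + (r - 1) * s := by nlinarith
  exact div_pos (mul_pos (by positivity) (by linarith)) (by positivity)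

lemma inflectionFn_neg_at_min : inflectionFn r ((r - 2) / (2 * (r - 1))) < 0 := by
  have hs₀ : 0 < (r - 2) / (2 * (r - 1)) := div_pos (by linarith) (by linarith)
  simpa [inflectionFn_zero] using strictAntiOn_inflectionFn hr (left_mem_Icc.2 hs₀.le)
    (right_mem_Icc.2 hs₀.le) hs₀

lemma inflectionFn_pos_at_sub_two_div_sub_one : 0 < inflectionFn r ((r - 2) / (r - 1)) := by
  have ht : 1 < r - 1 := by linarith
  have hval : inflectionFn r ((r - 2) / (r - 1)) = (r - 1) - (r - 1)⁻¹ - 2 * log (r - 1) := by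
    have h₁ : 1 - (r - 2) / (r - 1) = (r - 1)⁻¹ := by field_simp; ring
    have h₂ : 1 + (r - 1) * ((r - 2) / (r - 1)) = r - 1 := by field_simp; ring
    rw [inflectionFn, logRatio, h₁, h₂, div_inv_eq_mul, ← sq, log_pow]
    field_simp
    ring
  -- `log t < sinh (log t) = (t - t⁻¹) / 2` for `t = r - 1 > 1`
  have := self_lt_sinh_iff.2 (log_pos ht)
  rw [sinh_log (by linarith)] at this
  linarith

lemma exists_inflectionFn_sign_change :
    ∃ c ∈ Ioo ((r - 2) / (2 * (r - 1))) ((r - 2) / (r - 1)),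
      (∀ s ∈ Ioo 0 c, inflectionFn r s < 0) ∧ (∀ s ∈ Ioo c 1, 0 < inflectionFn r s) := by
  have hs₀ : 0 < (r - 2) / (2 * (r - 1)) := div_pos (by linarith) (by linarith)
  have hs₀₁ : (r - 2) / (2 * (r - 1)) < (r - 2) / (r - 1) :=
    div_lt_div_of_pos_left (by linarith) (by linarith) (by linarith)
  have hs₁ : (r - 2) / (r - 1) < 1 := by rw [div_lt_one (by linarith)]; linarith
  obtain ⟨c, hc, hc_zero⟩ := intermediate_value_Ioo hs₀₁.le
    ((continuousOn_inflectionFn (by linarith)).mono (Icc_subset_Ico hs₀.le hs₁))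
    ⟨inflectionFn_neg_at_min hr, inflectionFn_pos_at_sub_two_div_sub_one hr⟩
  have hc₁ : c < 1 := hc.2.trans hs₁
  refine ⟨c, hc, fun s hs ↦ ?_, fun s hs ↦ ?_⟩
  · rcases le_or_gt s ((r - 2) / (2 * (r - 1))) with hle | hgt
    · simpa [inflectionFn_zero] using
        strictAntiOn_inflectionFn hr (left_mem_Icc.2 hs₀.le) ⟨hs.1.le, hle⟩ hs.1
    · simpa [hc_zero] using
        strictMonoOn_inflectionFn hr ⟨hgt.le, hs.2.trans hc₁⟩ ⟨hc.1.le, hc₁⟩ hs.2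
  · simpa [hc_zero] using
      strictMonoOn_inflectionFn hr ⟨hc.1.le, hc₁⟩ ⟨(hc.1.trans hs.1).le, hs.2⟩ hs.1

end InflectionFn

lemma qEntropy_eq_qaryEntropy_div_log {q : ℕ} (hq : 1 < q) (y : ℝ) :
    qEntropy q y = qaryEntropy q y / log q := by
  have hq₁ : (q : ℝ) - 1 ≠ 0 := sub_ne_zero.2 (by exact_mod_cast hq.ne')
  rcases eq_or_ne y 0 with rfl | hy
  · simp [qEntropy]
  simp only [qEntropy, qaryEntropy, binEntropy, logb, log_div hq₁ hy, one_div, log_inv]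
  push_cast
  ring

lemma hasDerivAt_sqrt_one_sub_div {θ x : ℝ} (hθ : θ ≠ 0) (hx : 0 < 1 - x / θ) :
    HasDerivAt (fun x ↦ √(1 - x / θ)) (-1 / (2 * θ * √(1 - x / θ))) x :=
  ((hasDerivAt_sqrt hx.ne').comp x (((hasDerivAt_id' x).div_const θ).const_sub 1)).congr_deriv
    (by field_simp)

noncomputable def eliasParam (q : ℕ) (x : ℝ) : ℝ := √(1 - x / (1 - 1 / (q : ℝ)))

section EliasParam

variable {q : ℕ} {x : ℝ}

lemma one_sub_inv_pos (hq : 1 < q) : 0 < 1 - 1 / (q : ℝ) :=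
  sub_pos.2 ((div_lt_one (by positivity)).2 (by exact_mod_cast hq))

lemma lt_eliasParam_iff (hq : 1 < q) {c : ℝ} (hc : 0 ≤ c) :
    c < eliasParam q x ↔ x < (1 - 1 / (q : ℝ)) * (1 - c ^ 2) := by
  rw [eliasParam, lt_sqrt hc, lt_sub_comm, div_lt_iff₀ (one_sub_inv_pos hq), mul_comm]

lemma eliasParam_lt_iff (hq : 1 < q) {c : ℝ} (hc : 0 < c) :
    eliasParam q x < c ↔ (1 - 1 / (q : ℝ)) * (1 - c ^ 2) < x := by
  rw [eliasParam, sqrt_lt' hc, sub_lt_comm, lt_div_iff₀ (one_sub_inv_pos hq), mul_comm]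

lemma eliasParam_pos (hq : 1 < q) (hx : x < 1 - 1 / (q : ℝ)) : 0 < eliasParam q x :=
  (lt_eliasParam_iff hq le_rfl).2 (by simpa using hx)

lemma eliasParam_lt_one (hq : 1 < q) (hx : 0 < x) : eliasParam q x < 1 :=
  (eliasParam_lt_iff hq one_pos).2 (by simpa using hx)

lemma hasDerivAt_eliasParam (hq : 1 < q) (hx : x < 1 - 1 / (q : ℝ)) :
    HasDerivAt (eliasParam q) (-1 / (2 * (1 - 1 / (q : ℝ)) * eliasParam q x)) x :=
  hasDerivAt_sqrt_one_sub_div (one_sub_inv_pos hq).ne'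
    (by rw [sub_pos, div_lt_one (one_sub_inv_pos hq)]; exact hx)

end EliasParam

lemma hasDerivAt_qaryEntropy_one_sub_inv_mul {q : ℕ} {s : ℝ} (hq : 1 < q) (hs₀ : 0 ≤ s)
    (hs₁ : s < 1) :
    HasDerivAt (qaryEntropy q) (logRatio q s) ((1 - 1 / (q : ℝ)) * (1 - s)) := by
  have hq₁ : (1 : ℝ) < q := by exact_mod_cast hq
  have hy₀ : 0 < (1 - 1 / (q : ℝ)) * (1 - s) := mul_pos (one_sub_inv_pos hq) (by linarith)
  have hy₁ : 0 < 1 - (1 - 1 / (q : ℝ)) * (1 - s) := by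
    have : 0 < (1 + (q - 1) * s) / q := by positivity
    convert this using 1; field_simp; ring
  refine (hasDerivAt_qaryEntropy hy₀.ne' (by linarith)).congr_deriv ?_
  rw [logRatio, ← log_mul (by linarith) hy₁.ne', ← log_div (by positivity) hy₀.ne']
  have : (1 : ℝ) - s ≠ 0 := by linarith
  have : (q : ℝ) - 1 ≠ 0 := by linarith
  congr 1
  field_simp
  ring

section AlphaE

variable {q : ℕ} {x : ℝ}

lemma alphaE_eq (hq : 1 < q) :
    alphaE q =
      fun x ↦ 1 - qaryEntropy q ((1 - 1 / (q : ℝ)) * (1 - eliasParam q x)) / log q := by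
  ext x
  rw [alphaE, qEntropy_eq_qaryEntropy_div_log hq, eliasParam]

lemma continuous_alphaE (hq : 1 < q) : Continuous (alphaE q) := by
  rw [alphaE_eq hq]
  unfold eliasParam
  fun_prop

lemma hasDerivAt_alphaE (hq : 1 < q) (hx : x ∈ Ioo 0 (1 - 1 / (q : ℝ))) :
    HasDerivAt (alphaE q) (-(logRatio q (eliasParam q x) / eliasParam q x) / (2 * log q)) x := by
  have hσ₀ := eliasParam_pos hq hx.2
  have hlog : 0 < log q := log_pos (by exact_mod_cast hq)
  have hq₁ : (q : ℝ) - 1 ≠ 0 := sub_ne_zero.2 (by exact_mod_cast hq.ne')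
  have hy := (((hasDerivAt_eliasParam hq hx.2).const_sub 1).const_mul (1 - 1 / (q : ℝ)))
  have hH := hasDerivAt_qaryEntropy_one_sub_inv_mul hq hσ₀.le (eliasParam_lt_one hq hx.1)
  rw [alphaE_eq hq]
  refine (((hH.comp x hy).div_const (log q)).const_sub 1).congr_deriv ?_
  have : (q : ℝ) ≠ 0 := by positivity
  field_simp

lemma hasDerivAt_deriv_alphaE (hq : 1 < q) (hx : x ∈ Ioo 0 (1 - 1 / (q : ℝ))) :
    HasDerivAt (deriv (alphaE q)) (inflectionFn q (eliasParam q x) /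
      (4 * (1 - 1 / (q : ℝ)) * eliasParam q x ^ 3 * log q)) x := by
  have hσ₀ := eliasParam_pos hq hx.2
  have hlog : 0 < log q := log_pos (by exact_mod_cast hq)
  have hq₁ : (q : ℝ) - 1 ≠ 0 := sub_ne_zero.2 (by exact_mod_cast hq.ne')
  have hev : deriv (alphaE q) =ᶠ[nhds x]
      fun x ↦ -(logRatio q (eliasParam q x) / eliasParam q x) / (2 * log q) := by
    filter_upwards [isOpen_Ioo.mem_nhds hx] with y hy using (hasDerivAt_alphaE hq hy).deriv
  have hφ := hasDerivAt_logRatio_div_self (r := q) (by exact_mod_cast hq.le) hσ₀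
    (eliasParam_lt_one hq hx.1)
  exact ((((hφ.comp x (hasDerivAt_eliasParam hq hx.2)).neg).div_const (2 * log q)
    ).congr_of_eventuallyEq hev).congr_deriv (by field_simp; ring)

lemma deriv_deriv_alphaE_pos_iff (hq : 1 < q) (hx : x ∈ Ioo 0 (1 - 1 / (q : ℝ))) :
    0 < deriv (deriv (alphaE q)) x ↔ 0 < inflectionFn q (eliasParam q x) := by
  have := eliasParam_pos hq hx.2
  have := one_sub_inv_pos hq
  have : 0 < log q := log_pos (by exact_mod_cast hq)
  rw [(hasDerivAt_deriv_alphaE hq hx).deriv, div_pos_iff_of_pos_right (by positivity)]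

lemma deriv_deriv_alphaE_neg_iff (hq : 1 < q) (hx : x ∈ Ioo 0 (1 - 1 / (q : ℝ))) :
    deriv (deriv (alphaE q)) x < 0 ↔ inflectionFn q (eliasParam q x) < 0 := by
  have := eliasParam_pos hq hx.2
  have := one_sub_inv_pos hq
  have : 0 < log q := log_pos (by exact_mod_cast hq)
  rw [(hasDerivAt_deriv_alphaE hq hx).deriv, div_lt_iff₀ (by positivity), zero_mul]

variable {a b : ℝ}

lemma differentiableOn_alphaE (hq : 1 < q) :
    DifferentiableOn ℝ (alphaE q) (Ioo 0 (1 - 1 / (q : ℝ))) :=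
  fun _ hx ↦ (hasDerivAt_alphaE hq hx).differentiableAt.differentiableWithinAt

lemma differentiableOn_deriv_alphaE (hq : 1 < q) :
    DifferentiableOn ℝ (deriv (alphaE q)) (Ioo 0 (1 - 1 / (q : ℝ))) :=
  fun _ hx ↦ (hasDerivAt_deriv_alphaE hq hx).differentiableAt.differentiableWithinAt

lemma convexOn_alphaE (hq : 1 < q) (ha : 0 ≤ a) (hb : b ≤ 1 - 1 / (q : ℝ))
    (h : ∀ x ∈ Ioo a b, 0 ≤ deriv (deriv (alphaE q)) x) :
    ConvexOn ℝ (Icc a b) (alphaE q) := by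
  have hsub : Ioo a b ⊆ Ioo 0 (1 - 1 / (q : ℝ)) := Ioo_subset_Ioo ha hb
  refine convexOn_of_deriv2_nonneg (convex_Icc a b) (continuous_alphaE hq).continuousOn ?_ ?_ ?_
    <;> rw [interior_Icc]
  exacts [(differentiableOn_alphaE hq).mono hsub, (differentiableOn_deriv_alphaE hq).mono hsub, h]

lemma concaveOn_alphaE (hq : 1 < q) (ha : 0 ≤ a) (hb : b ≤ 1 - 1 / (q : ℝ))
    (h : ∀ x ∈ Ioo a b, deriv (deriv (alphaE q)) x ≤ 0) :
    ConcaveOn ℝ (Icc a b) (alphaE q) := by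
  have hsub : Ioo a b ⊆ Ioo 0 (1 - 1 / (q : ℝ)) := Ioo_subset_Ioo ha hb
  refine concaveOn_of_deriv2_nonpos (convex_Icc a b) (continuous_alphaE hq).continuousOn ?_ ?_ ?_
    <;> rw [interior_Icc]
  exacts [(differentiableOn_alphaE hq).mono hsub, (differentiableOn_deriv_alphaE hq).mono hsub, h]

end AlphaE

lemma one_sub_inv_mul_one_sub_sq_mem_Ioo {r c : ℝ} (hr : 2 < r)
    (hc : c ∈ Ioo ((r - 2) / (2 * (r - 1))) ((r - 2) / (r - 1))) :
    (1 - 1 / r) * (1 - c ^ 2) ∈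
      Ioo ((2 * r - 3) / (r * (r - 1))) ((3 / 4) * (r - 4 / 3) / (r - 1)) := by
  have hr₁ : 0 < r - 1 := by linarith
  have hθ : (1 - 1 / r) * (1 - c ^ 2) = ((r - 1) ^ 2 - ((r - 1) * c) ^ 2) / (r * (r - 1)) := by
    field_simp
  have hlo : r - 2 < 2 * ((r - 1) * c) := by
    have := hc.1; rw [div_lt_iff₀ (by positivity)] at this; linarith
  have hhi : (r - 1) * c < r - 2 := by
    have := hc.2; rw [lt_div_iff₀ hr₁] at this; linarith
  rw [hθ]
  constructor
  · exact div_lt_div_of_pos_right (by nlinarith) (by positivity)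
  · have hsq : (r - 2) ^ 2 < 4 * ((r - 1) * c) ^ 2 := by nlinarith
    rw [div_lt_div_iff₀ (by positivity) hr₁]
    nlinarith [mul_lt_mul_of_pos_right hsq hr₁]

theorem stmt15 (q : ℕ) (hq : 3 ≤ q) :
    ∃ δE ∈ Set.Ioo ((2 * (q : ℝ) - 3) / ((q : ℝ) * ((q : ℝ) - 1)))
        ((3 / 4) * ((q : ℝ) - 4 / 3) / ((q : ℝ) - 1)),
      ConvexOn ℝ (Set.Icc (0 : ℝ) δE) (alphaE q) ∧
      ConcaveOn ℝ (Set.Icc δE (1 - 1 / (q : ℝ))) (alphaE q) ∧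
      (∀ x ∈ Set.Ioo (0 : ℝ) δE, 0 < deriv (deriv (alphaE q)) x) ∧
      (∀ x ∈ Set.Ioo δE (1 - 1 / (q : ℝ)), deriv (deriv (alphaE q)) x < 0) := by
  have hq₁ : 1 < q := by omega
  have hr : (2 : ℝ) < q := by exact_mod_cast hq
  obtain ⟨c, hc, hneg, hpos⟩ := exists_inflectionFn_sign_change hr
  have hc₀ : 0 < c := (div_pos (by linarith) (by linarith)).trans hc.1
  have hc₁ : c < 1 := hc.2.trans (by rw [div_lt_one (by linarith)]; linarith)
  have hθ := one_sub_inv_pos hq₁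
  set δ := (1 - 1 / (q : ℝ)) * (1 - c ^ 2)
  have hδ₀ : 0 < δ := mul_pos hθ (by nlinarith)
  have hδθ : δ < 1 - 1 / (q : ℝ) := by nlinarith [mul_pos hθ (pow_pos hc₀ 2)]
  have hconvex : ∀ x ∈ Ioo 0 δ, 0 < deriv (deriv (alphaE q)) x := fun x hx ↦
    (deriv_deriv_alphaE_pos_iff hq₁ ⟨hx.1, hx.2.trans hδθ⟩).2
      (hpos _ ⟨(lt_eliasParam_iff hq₁ hc₀.le).2 hx.2, eliasParam_lt_one hq₁ hx.1⟩)
  have hconcave : ∀ x ∈ Ioo δ (1 - 1 / (q : ℝ)), deriv (deriv (alphaE q)) x < 0 := fun x hx ↦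
    (deriv_deriv_alphaE_neg_iff hq₁ ⟨hδ₀.trans hx.1, hx.2⟩).2
      (hneg _ ⟨eliasParam_pos hq₁ hx.2, (eliasParam_lt_iff hq₁ hc₀).2 hx.1⟩)
  exact ⟨_, one_sub_inv_mul_one_sub_sq_mem_Ioo hr hc,
    convexOn_alphaE hq₁ le_rfl hδθ.le fun x hx ↦ (hconvex x hx).le,
    concaveOn_alphaE hq₁ hδ₀.le le_rfl fun x hx ↦ (hconcave x hx).le, hconvex, hconcave⟩
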